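/- In a hidden Markov chain model, the smoothed probabilities satisfy the backward recursion: for 0 ≤ t ≤ T−2 and every state j, P(S_t = j | X = x) = P(S_t = j | X_0^t = x_0^t) · Σ_k [P(S_{t+1} = k | X = x) / P(S_{t+1} = k | X_0^t = x_0^t)] p_{jk}, where the sum ranges over the states k with P(S_{t+1} = k | X_0^t = x_0^t) > 0, and where P(S_{t+1} = k | X_0^t = x_0^t) = Σ_i p_{ik} P(S_t = i | X_0^t = x_0^t). -/

import Mathlib

/-- A hidden Markov chain (HMC) model with `J` states, observation alphabet
`{0, …, V-1}` and sequence length `T`: initial probabilities, transition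
probabilities and emission probabilities. -/
structure HMCModel (J V T : ℕ) where
  init : Fin J → ℝ
  trans : Fin J → Fin J → ℝ
  emit : Fin J → Fin V → ℝ
  init_nonneg : ∀ j, 0 ≤ init j
  init_sum : ∑ j, init j = 1
  trans_nonneg : ∀ i j, 0 ≤ trans i j
  trans_sum : ∀ i, ∑ j, trans i j = 1
  emit_nonneg : ∀ j y, 0 ≤ emit j y
  emit_sum : ∀ j, ∑ y, emit j y = 1

namespace HMCModel

variable {J V T : ℕ} [NeZero J] [NeZero T]

/-- The joint law of the state sequence and the observed sequence:
`P(S = s, X = x) = π_{s_0} b_{s_0}(x_0) ∏_{t=1}^{T-1} p_{s_{t-1} s_t} b_{s_t}(x_t)`. -/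
noncomputable def joint (M : HMCModel J V T) (s : Fin T → Fin J) (x : Fin T → Fin V) : ℝ :=
  M.init (s 0) * M.emit (s 0) (x 0) *
    ∏ t ∈ Finset.univ.filter (fun t : Fin T => t ≠ 0),
      M.trans (s (t - 1)) (s t) * M.emit (s t) (x t)

open Classical in
/-- Probability of an event on (state sequence, observed sequence). -/
noncomputable def pr (M : HMCModel J V T)
    (E : (Fin T → Fin J) → (Fin T → Fin V) → Prop) : ℝ :=
  ∑ s : Fin T → Fin J, ∑ y : Fin T → Fin V, if E s y then M.joint s y else 0

/-- Conditional probability `P(A | B)`; it is `0` when the conditioning event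
has probability zero. -/
noncomputable def cpr (M : HMCModel J V T)
    (A B : (Fin T → Fin J) → (Fin T → Fin V) → Prop) : ℝ :=
  if 0 < M.pr B then M.pr (fun s y => A s y ∧ B s y) / M.pr B else 0

/-- Entropy of the random vector `f(S)` given the event `E`
(natural logarithm, with the convention `0 log 0 = 0`). -/
noncomputable def condEnt (M : HMCModel J V T) {α : Type*} [Fintype α]
    (f : (Fin T → Fin J) → α)
    (E : (Fin T → Fin J) → (Fin T → Fin V) → Prop) : ℝ :=
  -∑ a : α, M.cpr (fun s _ => f s = a) E * Real.log (M.cpr (fun s _ => f s = a) E)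

/-- Entropy of `f(S)` given the random vector `g(S)` and the event `E`:
`H(f(S) | g(S), E) = ∑_c P(g(S) = c | E) H(f(S) | g(S) = c, E)`. -/
noncomputable def condEntGiven (M : HMCModel J V T) {α β : Type*} [Fintype α] [Fintype β]
    (f : (Fin T → Fin J) → α) (g : (Fin T → Fin J) → β)
    (E : (Fin T → Fin J) → (Fin T → Fin V) → Prop) : ℝ :=
  ∑ c : β, M.cpr (fun s _ => g s = c) E * M.condEnt f (fun s y => g s = c ∧ E s y)

/-- The event `X = x`. -/
def obsEq (x : Fin T → Fin V) : (Fin T → Fin J) → (Fin T → Fin V) → Prop :=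
  fun _ y => y = x

/-- The partial state vector `S_0^{t-1}` (coordinates `≥ t` are padded by `0`). -/
def prefixVar (t : ℕ) (s : Fin T → Fin J) : Fin T → Fin J :=
  fun r => if (r : ℕ) < t then s r else 0

/-- The partial state vector `S_t^{T-1}` (coordinates `< t` are padded by `0`). -/
def suffixVar (t : ℕ) (s : Fin T → Fin J) : Fin T → Fin J :=
  fun r => if t ≤ (r : ℕ) then s r else 0

end HMCModel

/-!
Cut the time axis after `t`: a state path is `Fin.append u v`, with `u` the states up to `t`
and `v` the later ones, and the joint law factors as (weight of `u` and of the observations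
up to `t`) · `p_{u_t v_0}` · (weight of `v` and of the later observations). Summing out an
unobserved future costs nothing, because the rows of `p` and of `b` are probability
vectors.
With the forward variable `α_i = P(S_t = i, X_0^t = x_0^t)` and the backward variable
`β_k = P(X_{t+1}^{T-1} = x_{t+1}^{T-1} | S_{t+1} = k)` this gives
`P(S_{t+1} = k, X_0^t = x_0^t) = ∑_i α_i p_{ik}`, `P(S_t = j, X = x) = α_j ∑_k p_{jk} β_k`
and `P(S_{t+1} = k, X = x) = (∑_i α_i p_{ik}) β_k`. The recursion is then algebra: a state `k`
whose predicted probability vanishes carries no mass, as `α_j p_{jk} ≤ ∑_i α_i p_{ik}`.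
-/

open Finset

lemma Fin.sum_univ_append {α β : Type*} [Fintype α] [AddCommMonoid β] {a b : ℕ}
    (f : (Fin (a + b) → α) → β) :
    ∑ s, f s = ∑ u : Fin a → α, ∑ v : Fin b → α, f (Fin.append u v) := by
  rw [← (Fin.appendEquiv a b).sum_comp, Fintype.sum_prod_type]
  rfl

lemma Fin.append_eq_iff {α : Type*} {a b : ℕ} (y : Fin a → α) (z : Fin b → α)
    (x : Fin (a + b) → α) :
    Fin.append y z = x ↔
      y = (fun i => x (Fin.castAdd b i)) ∧ z = (fun i => x (Fin.natAdd a i)) := by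
  constructor
  · rintro rfl
    simp only [Fin.append_left, Fin.append_right, and_self]
  · rintro ⟨rfl, rfl⟩
    exact Fin.append_castAdd_natAdd

lemma Fin.forall_le_castAdd_last_append_iff {α : Type*} {m b : ℕ} (y : Fin (m + 1) → α)
    (z : Fin b → α) (x : Fin (m + 1 + b) → α) :
    (∀ r ≤ Fin.castAdd b (Fin.last m), Fin.append y z r = x r) ↔
      y = fun i => x (Fin.castAdd b i) := by
  constructor
  · intro h
    funext i
    rw [← h _ (by simpa [Fin.le_def] using i.is_le), Fin.append_left]
  · rintro rfl r hr
    induction r using Fin.addCases with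
    | left i => rw [Fin.append_left]
    | right i => exact absurd hr (by simp [Fin.le_def]; omega)

lemma Finset.sum_comp_mul_eq_sum_mul_sum_fiber {α β R : Type*} [Fintype α] [Fintype β]
    [DecidableEq β] [NonUnitalNonAssocSemiring R] (φ : α → β) (g : β → R) (w : α → R) :
    ∑ a, g (φ a) * w a = ∑ b, g b * ∑ a with φ a = b, w a := by
  rw [← sum_fiberwise univ φ]
  refine sum_congr rfl fun b _ => ?_
  rw [mul_sum]
  exact sum_congr rfl fun a ha => by rw [(mem_filter.mp ha).2]

lemma Fin.castAdd_last_add_one (m n : ℕ) :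
    (Fin.castAdd (n + 1) (Fin.last m) : Fin (m + 1 + (n + 1))) + 1 = Fin.natAdd (m + 1) 0 := by
  ext
  rw [Fin.val_add_one_of_lt (by simp [Fin.lt_def]; omega)]
  simp

lemma backward_recursion_algebra {ι K : Type*} [Fintype ι] [Field K] [LinearOrder K]
    [IsStrictOrderedRing K] {P Q : K} (hQ : 0 < Q) (α ρ : ι → K) (p : ι → ι → K)
    (hα : ∀ i, 0 ≤ α i) (hp : ∀ i k, 0 ≤ p i k) (j : ι) :
    α j * (∑ k, p j k * ρ k) / P
      = α j / Q * ∑ k ∈ univ.filter (fun k => 0 < (∑ i, α i * p i k) / Q),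
          (∑ i, α i * p i k) * ρ k / P / ((∑ i, α i * p i k) / Q) * p j k := by
  have hsupp (k : ι) (hk : α j * (p j k * ρ k) / P ≠ 0) : 0 < ∑ i, α i * p i k := by
    have hjk : 0 < α j * p j k := (mul_nonneg (hα j) (hp j k)).lt_of_ne
      fun h => hk (by rw [← mul_assoc, ← h, zero_mul, zero_div])
    exact hjk.trans_le (single_le_sum (f := fun i => α i * p i k)
      (fun i _ => mul_nonneg (hα i) (hp i k)) (mem_univ j))
  rw [filter_congr fun k _ => div_pos_iff_of_pos_right hQ, mul_sum, mul_sum, sum_div,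
    ← sum_filter_of_ne fun k _ => hsupp k]
  refine sum_congr rfl fun k hk => ?_
  have hB := (mem_filter.mp hk).2
  field_simp

namespace HMCModel

variable {J V T : ℕ}

section Chain

variable (M : HMCModel J V T)

noncomputable def chainWeight {n : ℕ} (s : Fin (n + 1) → Fin J) (y : Fin (n + 1) → Fin V) :
    ℝ :=
  M.emit (s 0) (y 0) *
    ∏ q : Fin n, M.trans (s q.castSucc) (s q.succ) * M.emit (s q.succ) (y q.succ)

noncomputable def pathProb {n : ℕ} (s : Fin (n + 1) → Fin J) : ℝ :=
  ∏ q : Fin n, M.trans (s q.castSucc) (s q.succ)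

lemma chainWeight_eq_pathProb_mul {n : ℕ} (s : Fin (n + 1) → Fin J)
    (y : Fin (n + 1) → Fin V) :
    M.chainWeight s y = M.pathProb s * ∏ r, M.emit (s r) (y r) := by
  rw [chainWeight, pathProb, prod_mul_distrib, Fin.prod_univ_succ]
  ring

lemma sum_chainWeight {n : ℕ} (s : Fin (n + 1) → Fin J) :
    ∑ y, M.chainWeight s y = M.pathProb s := by
  simp only [chainWeight_eq_pathProb_mul, ← mul_sum, ← Fintype.prod_sum, M.emit_sum,
    prod_const_one, mul_one]

lemma chainWeight_append {m n : ℕ} (u : Fin (m + 1) → Fin J) (v : Fin (n + 1) → Fin J)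
    (y : Fin (m + 1) → Fin V) (z : Fin (n + 1) → Fin V) :
    M.chainWeight (Fin.append u v : Fin (m + 1 + (n + 1)) → Fin J)
        (Fin.append y z : Fin (m + 1 + (n + 1)) → Fin V)
      = M.chainWeight u y * (M.trans (u (Fin.last m)) (v 0) * M.chainWeight v z) := by
  rw [chainWeight, chainWeight, chainWeight]
  erw [Fin.prod_univ_add (a := m + 1) (b := n)]
  rw [Fin.prod_univ_castSucc]
  have h0 : (0 : Fin (m + 1 + (n + 1))) = Fin.castAdd (n + 1) 0 := rfl
  have h1 (q : Fin m) : (Fin.castAdd n q.castSucc).succ = Fin.castAdd (n + 1) q.succ := rfl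
  have h2 : (Fin.castAdd n (Fin.last m)).succ = Fin.natAdd (m + 1) (0 : Fin (n + 1)) := rfl
  have h3 (q : Fin n) : (Fin.natAdd (m + 1) q).castSucc = Fin.natAdd (m + 1) q.castSucc := rfl
  simp only [h0, h1, h2, h3, Fin.castSucc_castAdd, Fin.succ_natAdd, Fin.append_left,
    Fin.append_right]
  ring

lemma pathProb_cons {n : ℕ} (a : Fin J) (w : Fin (n + 1) → Fin J) :
    M.pathProb (Fin.cons a w : Fin (n + 2) → Fin J) = M.trans a (w 0) * M.pathProb w := by
  simp only [pathProb, Fin.prod_univ_succ, Fin.castSucc_zero, Fin.cons_zero, Fin.cons_succ,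
    ← Fin.succ_castSucc]

lemma sum_mul_pathProb {n : ℕ} (f : Fin J → ℝ) :
    ∑ s : Fin (n + 1) → Fin J, f (s 0) * M.pathProb s = ∑ k, f k := by
  induction n generalizing f with
  | zero => simp [pathProb, ← (Equiv.funUnique (Fin 1) (Fin J)).symm.sum_comp]
  | succ n ih =>
    rw [← (Fin.consEquiv fun _ => Fin J).sum_comp, Fintype.sum_prod_type]
    simp only [Fin.consEquiv, Equiv.coe_fn_mk, Fin.cons_zero, pathProb_cons, ← mul_sum,
      fun a => ih (M.trans a), M.trans_sum, mul_one]

end Chain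

lemma joint_nonneg [NeZero T] (M : HMCModel J V T) (s : Fin T → Fin J) (y : Fin T → Fin V) :
    0 ≤ M.joint s y :=
  mul_nonneg (mul_nonneg (M.init_nonneg _) (M.emit_nonneg _ _))
    (prod_nonneg fun _ _ => mul_nonneg (M.trans_nonneg _ _) (M.emit_nonneg _ _))

lemma pr_nonneg [NeZero T] {M : HMCModel J V T}
    {E : (Fin T → Fin J) → (Fin T → Fin V) → Prop} :
    0 ≤ M.pr E :=
  sum_nonneg fun s _ => sum_nonneg fun y _ => by
    split_ifs
    exacts [M.joint_nonneg s y, le_rfl]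

lemma pr_mono [NeZero T] {M : HMCModel J V T}
    {E E' : (Fin T → Fin J) → (Fin T → Fin V) → Prop} (h : ∀ s y, E s y → E' s y) :
    M.pr E ≤ M.pr E' := by
  refine sum_le_sum fun s _ => sum_le_sum fun y _ => ?_
  split_ifs with hE hE'
  · rfl
  · exact absurd (h s y hE) hE'
  · exact M.joint_nonneg s y
  · rfl

lemma joint_eq_init_mul_chainWeight {N : ℕ} (M : HMCModel J V (N + 1)) (s : Fin (N + 1) → Fin J)
    (y : Fin (N + 1) → Fin V) : M.joint s y = M.init (s 0) * M.chainWeight s y := by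
  have succ_sub_one (q : Fin N) : q.succ - 1 = q.castSucc := by
    ext; simp [Fin.coe_sub_one, Fin.succ_ne_zero]
  rw [joint, chainWeight, prod_filter, Fin.prod_univ_succ, if_neg (by simp)]
  simp [Fin.succ_ne_zero, succ_sub_one, mul_assoc]

section Split

/- Time `t = m` in a chain of length `T = m + 1 + (n + 1)`: `forwardVar x i` is
`P(S_t = i, X_0^t = x_0^t)` and `backwardVar x k` is
`P(X_{t+1}^{T-1} = x_{t+1}^{T-1} | S_{t+1} = k)`. -/
variable {m n : ℕ} (M : HMCModel J V (m + 1 + (n + 1))) (x : Fin (m + 1 + (n + 1)) → Fin V)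

noncomputable def forwardVar (i : Fin J) : ℝ :=
  ∑ u : Fin (m + 1) → Fin J with u (Fin.last m) = i,
    M.init (u 0) * M.chainWeight u (fun r => x (Fin.castAdd (n + 1) r))

noncomputable def backwardVar (k : Fin J) : ℝ :=
  ∑ v : Fin (n + 1) → Fin J with v 0 = k, M.chainWeight v (fun r => x (Fin.natAdd (m + 1) r))

open Classical in
lemma pr_eq_sum_append (E : Fin J → Fin J → Prop)
    (O : (Fin (m + 1 + (n + 1)) → Fin J) → (Fin (m + 1 + (n + 1)) → Fin V) → Prop) :
    M.pr (fun s y => E (s (Fin.castAdd (n + 1) (Fin.last m))) (s (Fin.natAdd (m + 1) 0)) ∧ O s y)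
      = ∑ u : Fin (m + 1) → Fin J, ∑ v : Fin (n + 1) → Fin J, ∑ y, ∑ z,
          if E (u (Fin.last m)) (v 0) ∧ O (Fin.append u v) (Fin.append y z) then
            M.init (u 0) * M.chainWeight u y * (M.trans (u (Fin.last m)) (v 0) * M.chainWeight v z)
          else 0 := by
  rw [pr, Fin.sum_univ_append]
  refine sum_congr rfl fun u _ => sum_congr rfl fun v _ => ?_
  rw [Fin.sum_univ_append]
  refine sum_congr rfl fun y _ => sum_congr rfl fun z _ => ?_
  rw [Fin.append_left, Fin.append_right, joint_eq_init_mul_chainWeight, chainWeight_append,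
    mul_assoc]
  congr 2

lemma pr_pair_and_obsUpTo (E : Fin J → Fin J → Prop) [DecidableRel E] :
    M.pr (fun s y => E (s (Fin.castAdd (n + 1) (Fin.last m))) (s (Fin.natAdd (m + 1) 0)) ∧
        ∀ r ≤ Fin.castAdd (n + 1) (Fin.last m), y r = x r)
      = ∑ i, ∑ k, if E i k then M.forwardVar x i * M.trans i k else 0 := by
  set g : Fin J → Fin J → ℝ := fun i k => if E i k then M.trans i k else 0
  set w : (Fin (m + 1) → Fin J) → ℝ :=
    fun u => M.init (u 0) * M.chainWeight u (fun r => x (Fin.castAdd (n + 1) r))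
  calc _ = ∑ u, ∑ v : Fin (n + 1) → Fin J, g (u (Fin.last m)) (v 0) * w u * M.pathProb v := by
        rw [pr_eq_sum_append]
        refine sum_congr rfl fun u _ => sum_congr rfl fun v _ => ?_
        simp only [g, w, Fin.forall_le_castAdd_last_append_iff, ite_and, sum_ite_irrel,
          sum_const_zero, sum_ite_eq', mem_univ, if_true, ← mul_sum, sum_chainWeight]
        split_ifs <;> ring
    _ = ∑ u, ∑ k, g (u (Fin.last m)) k * w u :=
        sum_congr rfl fun u _ => M.sum_mul_pathProb fun k => g (u (Fin.last m)) k * w u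
    _ = ∑ k, ∑ i, g i k * M.forwardVar x i := by
        rw [sum_comm]
        exact sum_congr rfl fun k _ =>
          sum_comp_mul_eq_sum_mul_sum_fiber (fun u => u (Fin.last m)) (fun i => g i k) w
    _ = _ := by
        rw [sum_comm]
        refine sum_congr rfl fun i _ => sum_congr rfl fun k _ => ?_
        simp only [g]
        split_ifs <;> ring

lemma pr_pair_and_obsEq (E : Fin J → Fin J → Prop) [DecidableRel E] :
    M.pr (fun s y => E (s (Fin.castAdd (n + 1) (Fin.last m))) (s (Fin.natAdd (m + 1) 0)) ∧
        obsEq x s y)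
      = ∑ i, ∑ k, if E i k then M.forwardVar x i * M.trans i k * M.backwardVar x k else 0 := by
  set g : Fin J → Fin J → ℝ := fun i k => if E i k then M.trans i k else 0
  set w : (Fin (m + 1) → Fin J) → ℝ :=
    fun u => M.init (u 0) * M.chainWeight u (fun r => x (Fin.castAdd (n + 1) r))
  calc _ = ∑ u, ∑ v : Fin (n + 1) → Fin J,
        g (u (Fin.last m)) (v 0) * w u * M.chainWeight v (fun r => x (Fin.natAdd (m + 1) r)) := by
        rw [pr_eq_sum_append]
        refine sum_congr rfl fun u _ => sum_congr rfl fun v _ => ?_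
        simp only [g, w, obsEq, Fin.append_eq_iff, ite_and, sum_ite_irrel,
          sum_const_zero, sum_ite_eq', mem_univ, if_true]
        split_ifs <;> ring
    _ = ∑ u, ∑ k, g (u (Fin.last m)) k * w u * M.backwardVar x k :=
        sum_congr rfl fun u _ => sum_comp_mul_eq_sum_mul_sum_fiber
          (fun v : Fin (n + 1) → Fin J => v 0) (fun k => g (u (Fin.last m)) k * w u) _
    _ = ∑ k, (∑ i, g i k * M.forwardVar x i) * M.backwardVar x k := by
        rw [sum_comm]
        refine sum_congr rfl fun k _ => ?_
        rw [← sum_mul]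
        exact congrArg (· * M.backwardVar x k)
          (sum_comp_mul_eq_sum_mul_sum_fiber (fun u => u (Fin.last m)) (fun i => g i k) w)
    _ = _ := by
        simp only [sum_mul]
        rw [sum_comm]
        refine sum_congr rfl fun i _ => sum_congr rfl fun k _ => ?_
        simp only [g]
        split_ifs <;> ring

lemma pr_state_and_obsUpTo (i : Fin J) :
    M.pr (fun s y => s (Fin.castAdd (n + 1) (Fin.last m)) = i ∧
        ∀ r ≤ Fin.castAdd (n + 1) (Fin.last m), y r = x r) = M.forwardVar x i := by
  rw [M.pr_pair_and_obsUpTo x (fun a _ => a = i), sum_comm]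
  simp only [sum_ite_eq', mem_univ, if_true, ← mul_sum, M.trans_sum, mul_one]

lemma pr_next_and_obsUpTo (k : Fin J) :
    M.pr (fun s y => s (Fin.natAdd (m + 1) 0) = k ∧
        ∀ r ≤ Fin.castAdd (n + 1) (Fin.last m), y r = x r)
      = ∑ i, M.forwardVar x i * M.trans i k := by
  rw [M.pr_pair_and_obsUpTo x (fun _ b => b = k)]
  simp only [sum_ite_eq', mem_univ, if_true]

lemma pr_state_and_obsEq (j : Fin J) :
    M.pr (fun s y => s (Fin.castAdd (n + 1) (Fin.last m)) = j ∧ obsEq x s y)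
      = M.forwardVar x j * ∑ k, M.trans j k * M.backwardVar x k := by
  rw [M.pr_pair_and_obsEq x (fun a _ => a = j), sum_comm]
  simp only [sum_ite_eq', mem_univ, if_true, mul_sum, mul_assoc]

lemma pr_next_and_obsEq (k : Fin J) :
    M.pr (fun s y => s (Fin.natAdd (m + 1) 0) = k ∧ obsEq x s y)
      = (∑ i, M.forwardVar x i * M.trans i k) * M.backwardVar x k := by
  rw [M.pr_pair_and_obsEq x (fun _ b => b = k)]
  simp only [sum_ite_eq', mem_univ, if_true, sum_mul]

end Split

end HMCModel

open HMCModel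

theorem hmc_backward_recursion_general
    {J V T : ℕ} [NeZero T] (M : HMCModel J V T)
    (x : Fin T → Fin V) (hx : 0 < M.pr (obsEq x))
    (t : Fin T) (ht : (t : ℕ) < T - 1) (j : Fin J) :
    M.cpr (fun s _ => s t = j) (obsEq x)
      = M.cpr (fun s _ => s t = j) (fun _ y => ∀ r : Fin T, r ≤ t → y r = x r)
          * ∑ k ∈ Finset.univ.filter (fun k : Fin J =>
              0 < M.cpr (fun s _ => s (t + 1) = k) (fun _ y => ∀ r : Fin T, r ≤ t → y r = x r)),
              M.cpr (fun s _ => s (t + 1) = k) (obsEq x)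
                / M.cpr (fun s _ => s (t + 1) = k) (fun _ y => ∀ r : Fin T, r ≤ t → y r = x r)
                * M.trans j k
    ∧ ∀ k : Fin J,
        M.cpr (fun s _ => s (t + 1) = k) (fun _ y => ∀ r : Fin T, r ≤ t → y r = x r)
          = ∑ i : Fin J, M.trans i k *
              M.cpr (fun s _ => s t = i) (fun _ y => ∀ r : Fin T, r ≤ t → y r = x r) := by
  obtain ⟨m, n, rfl, htm⟩ : ∃ m n, T = m + 1 + (n + 1) ∧ (t : ℕ) = m :=
    ⟨t, T - t - 2, by omega, rfl⟩
  obtain rfl : t = Fin.castAdd (n + 1) (Fin.last m) := Fin.ext htm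
  have hQ : 0 < M.pr (fun _ y => ∀ r ≤ Fin.castAdd (n + 1) (Fin.last m), y r = x r) :=
    hx.trans_le (pr_mono fun _ y hy r _ => congrFun hy r)
  simp only [cpr, if_pos hx, if_pos hQ, Fin.castAdd_last_add_one, pr_state_and_obsUpTo,
    pr_next_and_obsUpTo, pr_state_and_obsEq, pr_next_and_obsEq]
  refine ⟨backward_recursion_algebra hQ _ _ _ (fun i => ?_) M.trans_nonneg j, fun k => ?_⟩
  · exact pr_state_and_obsUpTo M x i ▸ pr_nonneg
  · rw [sum_div]
    exact sum_congr rfl fun i _ => by ring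

/-- In a hidden Markov chain model, the smoothed probabilities
satisfy the backward recursion: for `0 ≤ t ≤ T-2` and every state `j`,
`P(S_t = j | X = x) = P(S_t = j | X_0^t = x_0^t) · ∑_k [P(S_{t+1} = k | X = x) / P(S_{t+1} = k | X_0^t = x_0^t)] p_{jk}`,
the sum ranging over the states `k` with `P(S_{t+1} = k | X_0^t = x_0^t) > 0`, and where
`P(S_{t+1} = k | X_0^t = x_0^t) = ∑_i p_{ik} P(S_t = i | X_0^t = x_0^t)`. -/
theorem hmc_backward_recursion
    {J V T : ℕ} [NeZero J] [NeZero T] (M : HMCModel J V T)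
    (x : Fin T → Fin V) (hx : 0 < M.pr (obsEq x))
    (t : Fin T) (ht : (t : ℕ) < T - 1) (j : Fin J) :
    M.cpr (fun s _ => s t = j) (obsEq x)
      = M.cpr (fun s _ => s t = j) (fun _ y => ∀ r : Fin T, r ≤ t → y r = x r)
          * ∑ k ∈ Finset.univ.filter (fun k : Fin J =>
              0 < M.cpr (fun s _ => s (t + 1) = k) (fun _ y => ∀ r : Fin T, r ≤ t → y r = x r)),
              M.cpr (fun s _ => s (t + 1) = k) (obsEq x)
                / M.cpr (fun s _ => s (t + 1) = k) (fun _ y => ∀ r : Fin T, r ≤ t → y r = x r)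
                * M.trans j k
    ∧ ∀ k : Fin J,
        M.cpr (fun s _ => s (t + 1) = k) (fun _ y => ∀ r : Fin T, r ≤ t → y r = x r)
          = ∑ i : Fin J, M.trans i k *
              M.cpr (fun s _ => s t = i) (fun _ y => ∀ r : Fin T, r ≤ t → y r = x r) :=
  hmc_backward_recursion_general M x hx t ht j
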